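/- arXiv:1106.5858 — 3 statements merged into one kernel-verified Lean document; each statement's English description precedes it below -/
import Mathlib

section
/- Let d ≥ 1 be an integer and let μ : (0,∞) → [0,∞) be completely monotone (infinitely differentiable with (−1)ⁿ μ⁽ⁿ⁾(t) ≥ 0 for all integers n ≥ 0 and t > 0), not identically zero, with ∫₀^∞ min(t,1) μ(t) dt < ∞. Assume that for every K > 0 there exists c = c(K) > 1 such that μ(r) ≤ c μ(2r) for all r ∈ (0, K). Define j(r) := ∫₀^∞ (4πt)^{-d/2} e^{-r²/(4t)} μ(t) dt for r > 0. Then for every K > 0 there exists a constant C = C(K) > 1 such that j(r) ≤ C j(2r) for all r ∈ (0, K). -/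
/-!
Write `p(t, r) = (4πt)^(-d/2) e^(-r²/(4t))`, so that `j(r) = ∫ p(t, r) μ(t) dt`. Two identities of
the Gaussian drive the proof: the parabolic scaling `p(t, r) = 2^d p(4t, 2r)` and
`p(t, r) = e^(3r²/(4t)) p(t, 2r)`. For `t < 1/4`, doubling `μ` twice gives `μ(t) ≤ c² μ(4t)`, so
the scaling and the substitution `s = 4t` bound this part of `j(r)` by `c² 2^d / 4 · j(2r)`; for
`t ≥ 1/4` the second identity costs at most the factor `e^(3r²) ≤ e^(3K²)`. All integrals are
finite because `p(t, r) = O(min(t, 1))` for `r ≠ 0`.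
-/

open MeasureTheory Real Set

lemma Real.exp_neg_le_factorial_div_pow {x : ℝ} (hx : 0 < x) (n : ℕ) :
    exp (-x) ≤ n.factorial / x ^ n := by
  rw [exp_neg, ← inv_div]
  exact inv_anti₀ (by positivity) (pow_div_factorial_le_exp _ hx.le n)

noncomputable def heatKernel (d : ℕ) (t r : ℝ) : ℝ :=
  (4 * π * t) ^ (-(d : ℝ) / 2) * exp (-(r ^ 2) / (4 * t))

namespace heatKernel

variable {d : ℕ} {t r : ℝ}

lemma nonneg (ht : 0 ≤ t) : 0 ≤ heatKernel d t r := by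
  unfold heatKernel; positivity

lemma continuousOn (d : ℕ) (r : ℝ) : ContinuousOn (fun t => heatKernel d t r) (Ioi 0) := by
  intro t ht
  have ht : 0 < t := ht
  have h4πt : 0 < 4 * π * t := by positivity
  have h4t : 4 * t ≠ 0 := by positivity
  apply ContinuousAt.continuousWithinAt
  unfold heatKernel
  fun_prop (disch := first | assumption | exact Or.inl h4πt.ne')

lemma le_one (ht : 1 ≤ t) : heatKernel d t r ≤ 1 := by
  have h4πt : 1 ≤ 4 * π * t := by nlinarith [pi_gt_three]
  have hpow : (4 * π * t) ^ (-(d : ℝ) / 2) ≤ 1 :=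
    rpow_le_one_of_one_le_of_nonpos h4πt (by rw [neg_div, neg_nonpos]; positivity)
  have hexp : exp (-(r ^ 2) / (4 * t)) ≤ 1 := by
    rw [exp_le_one_iff, neg_div, neg_nonpos]; positivity
  exact mul_le_one₀ hpow (exp_nonneg _) hexp

lemma le_mul_of_le_one (ht : 0 < t) (ht1 : t ≤ 1) (hr : r ≠ 0) :
    heatKernel d t r ≤
      (4 * π) ^ (-(d : ℝ) / 2) * ((d + 1).factorial * (4 / r ^ 2) ^ (d + 1)) * t := by
  have hexp : exp (-(r ^ 2) / (4 * t)) ≤ (d + 1).factorial * (4 / r ^ 2) ^ (d + 1) *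
      t ^ (d + 1) := by
    rw [neg_div]
    refine (exp_neg_le_factorial_div_pow (by positivity) (d + 1)).trans_eq ?_
    rw [div_pow, div_pow, mul_pow]
    field_simp
  have htpow : t ^ (-(d : ℝ) / 2) * t ^ (d + 1) ≤ t := by
    rw [← rpow_natCast, ← rpow_add ht, show -(d : ℝ) / 2 + ((d + 1 : ℕ) : ℝ) = d / 2 + 1 by
      push_cast; ring, rpow_add ht, rpow_one]
    exact mul_le_of_le_one_left ht.le (rpow_le_one ht.le ht1 (by positivity))
  calc heatKernel d t r
      ≤ (4 * π) ^ (-(d : ℝ) / 2) * t ^ (-(d : ℝ) / 2) *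
          ((d + 1).factorial * (4 / r ^ 2) ^ (d + 1) * t ^ (d + 1)) := by
        rw [heatKernel, mul_rpow (by positivity) ht.le]
        gcongr
    _ = (4 * π) ^ (-(d : ℝ) / 2) * ((d + 1).factorial * (4 / r ^ 2) ^ (d + 1)) *
          (t ^ (-(d : ℝ) / 2) * t ^ (d + 1)) := by ring
    _ ≤ _ := by gcongr

lemma exists_le_mul_min (d : ℕ) (hr : r ≠ 0) :
    ∃ M, 0 ≤ M ∧ ∀ t > 0, heatKernel d t r ≤ M * min t 1 := by
  set C := (4 * π) ^ (-(d : ℝ) / 2) * ((d + 1).factorial * (4 / r ^ 2) ^ (d + 1))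
  have hC : 0 ≤ C := by positivity
  refine ⟨max C 1, hC.trans (le_max_left _ _), fun t ht => ?_⟩
  rcases le_total t 1 with ht1 | ht1
  · rw [min_eq_left ht1]
    exact (le_mul_of_le_one ht ht1 hr).trans (by gcongr; exact le_max_left _ _)
  · rw [min_eq_right ht1, mul_one]
    exact (le_one ht1).trans (le_max_right _ _)

lemma two_pow_mul_four_mul_two_mul (ht : 0 < t) :
    2 ^ d * heatKernel d (4 * t) (2 * r) = heatKernel d t r := by
  have h4 : (4 : ℝ) ^ (-(d : ℝ) / 2) = ((2 : ℝ) ^ d)⁻¹ := by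
    rw [show (4 : ℝ) = 2 ^ (2 : ℝ) by norm_num, ← rpow_mul (by norm_num),
      show (2 : ℝ) * (-(d : ℝ) / 2) = -d by ring, rpow_neg (by norm_num), rpow_natCast]
  unfold heatKernel
  rw [show 4 * π * (4 * t) = 4 * (4 * π * t) by ring, mul_rpow (by norm_num) (by positivity), h4,
    show -((2 * r) ^ 2) / (4 * (4 * t)) = -(r ^ 2) / (4 * t) by field_simp; ring]
  field_simp

lemma eq_exp_mul_two_mul (d : ℕ) (t r : ℝ) :
    heatKernel d t r = exp (3 * r ^ 2 / (4 * t)) * heatKernel d t (2 * r) := by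
  unfold heatKernel
  rw [mul_left_comm, ← exp_add]
  ring_nf

end heatKernel

variable {μ : ℝ → ℝ} {d : ℕ} {r : ℝ}

lemma integrableOn_heatKernel_mul (hμ : AEStronglyMeasurable μ (volume.restrict (Ioi 0)))
    (hint : IntegrableOn (fun t => min t 1 * μ t) (Ioi 0)) (hr : r ≠ 0) :
    IntegrableOn (fun t => heatKernel d t r * μ t) (Ioi 0) := by
  obtain ⟨M, hM, hbound⟩ := heatKernel.exists_le_mul_min d hr
  refine (hint.const_mul M).mono
    (((heatKernel.continuousOn d r).aestronglyMeasurable measurableSet_Ioi).mul hμ) ?_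
  filter_upwards [ae_restrict_mem measurableSet_Ioi] with t (ht : 0 < t)
  rw [norm_mul, norm_mul, norm_mul, Real.norm_of_nonneg (heatKernel.nonneg ht.le),
    Real.norm_of_nonneg hM, Real.norm_of_nonneg (le_min ht.le zero_le_one), ← mul_assoc]
  gcongr
  exact hbound t ht

lemma le_sq_mul_of_doubling {c K : ℝ} (hc : 0 ≤ c)
    (hdbl : ∀ s ∈ Ioo 0 K, μ s ≤ c * μ (2 * s)) {t : ℝ} (ht : t ∈ Ioo 0 (K / 2)) :
    μ t ≤ c ^ 2 * μ (4 * t) := by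
  obtain ⟨ht0, htK⟩ := ht
  calc μ t ≤ c * μ (2 * t) := hdbl t ⟨ht0, by linarith⟩
    _ ≤ c * (c * μ (2 * (2 * t))) := by gcongr; exact hdbl _ ⟨by linarith, by linarith⟩
    _ = c ^ 2 * μ (4 * t) := by ring_nf

lemma heatKernel_mul_le_add (hμ0 : ∀ t > 0, 0 ≤ μ t) {c : ℝ} (hc : 0 ≤ c)
    (hdbl : ∀ s ∈ Ioo 0 (1 / 2), μ s ≤ c * μ (2 * s)) {t : ℝ} (ht : 0 < t) :
    heatKernel d t r * μ t ≤
      c ^ 2 * 2 ^ d * (heatKernel d (4 * t) (2 * r) * μ (4 * t)) +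
        exp (3 * r ^ 2) * (heatKernel d t (2 * r) * μ t) := by
  have hsmall : 0 ≤ heatKernel d (4 * t) (2 * r) * μ (4 * t) :=
    mul_nonneg (heatKernel.nonneg (by positivity)) (hμ0 _ (by positivity))
  have hlarge : 0 ≤ heatKernel d t (2 * r) * μ t :=
    mul_nonneg (heatKernel.nonneg ht.le) (hμ0 t ht)
  rcases lt_or_ge t (1 / 4) with ht4 | ht4
  · refine le_add_of_le_of_nonneg ?_ (mul_nonneg (by positivity) hlarge)
    rw [← heatKernel.two_pow_mul_four_mul_two_mul ht]
    calc 2 ^ d * heatKernel d (4 * t) (2 * r) * μ t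
        ≤ 2 ^ d * heatKernel d (4 * t) (2 * r) * (c ^ 2 * μ (4 * t)) := by
          gcongr
          · exact mul_nonneg (pow_nonneg zero_le_two _) (heatKernel.nonneg (by positivity))
          · exact le_sq_mul_of_doubling hc hdbl ⟨ht, by linarith⟩
      _ = _ := by ring
  · refine le_add_of_nonneg_of_le (mul_nonneg (by positivity) hsmall) ?_
    rw [heatKernel.eq_exp_mul_two_mul d t r, mul_assoc]
    gcongr
    rw [div_le_iff₀ (by positivity)]
    nlinarith [sq_nonneg r]

lemma integral_heatKernel_mul_le (hμ : AEStronglyMeasurable μ (volume.restrict (Ioi 0))) (hμ0 : ∀ t > 0, 0 ≤ μ t)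
    (hint : IntegrableOn (fun t => min t 1 * μ t) (Ioi 0)) {c : ℝ} (hc : 0 ≤ c)
    (hdbl : ∀ s ∈ Ioo 0 (1 / 2), μ s ≤ c * μ (2 * s)) (hr : r ≠ 0) :
    ∫ t in Ioi 0, heatKernel d t r * μ t ≤
      (c ^ 2 * 2 ^ d / 4 + exp (3 * r ^ 2)) * ∫ t in Ioi 0, heatKernel d t (2 * r) * μ t := by
  set F : ℝ → ℝ := fun t => heatKernel d t (2 * r) * μ t
  have hF : IntegrableOn F (Ioi 0) :=
    integrableOn_heatKernel_mul hμ hint (mul_ne_zero two_ne_zero hr)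
  have hF4 : IntegrableOn (fun t => F (4 * t)) (Ioi 0) := by
    rwa [integrableOn_Ioi_comp_mul_left_iff F 0 four_pos, mul_zero]
  have hsum : IntegrableOn (fun t => c ^ 2 * 2 ^ d * F (4 * t) + exp (3 * r ^ 2) * F t) (Ioi 0) :=
    (hF4.const_mul _).add (hF.const_mul _)
  calc ∫ t in Ioi 0, heatKernel d t r * μ t
      ≤ ∫ t in Ioi 0, (c ^ 2 * 2 ^ d * F (4 * t) + exp (3 * r ^ 2) * F t) :=
        setIntegral_mono_on (integrableOn_heatKernel_mul hμ hint hr) hsum measurableSet_Ioi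
          fun t ht => heatKernel_mul_le_add hμ0 hc hdbl ht
    _ = c ^ 2 * 2 ^ d * (4⁻¹ * ∫ t in Ioi 0, F t) + exp (3 * r ^ 2) * ∫ t in Ioi 0, F t := by
        rw [integral_add (hF4.const_mul _) (hF.const_mul _), integral_const_mul,
          integral_const_mul, integral_comp_mul_left_Ioi F 0 four_pos, mul_zero, smul_eq_mul]
    _ = _ := by ring

theorem levy_kernel_doubling_near_zero_general
    (d : ℕ) (μ : ℝ → ℝ)
    (hsmooth : ContDiffOn ℝ (⊤ : ℕ∞) μ (Ioi 0))
    (hsign : ∀ (n : ℕ) (t : ℝ), 0 < t →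
      0 ≤ (-1 : ℝ) ^ n * iteratedDerivWithin n μ (Ioi 0) t)
    (hint : IntegrableOn (fun t => min t 1 * μ t) (Ioi 0))
    (hdbl : ∀ K > (0 : ℝ), ∃ c > (1 : ℝ), ∀ r ∈ Ioo (0 : ℝ) K, μ r ≤ c * μ (2 * r))
    (j : ℝ → ℝ)
    (hj : ∀ r : ℝ, j r =
      ∫ t in Ioi (0 : ℝ), (4 * π * t) ^ (-(d : ℝ) / 2) * Real.exp (-(r ^ 2) / (4 * t)) * μ t) :
    ∀ K > (0 : ℝ), ∃ C > (1 : ℝ), ∀ r ∈ Ioo (0 : ℝ) K, j r ≤ C * j (2 * r) := by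
  intro K _
  obtain ⟨c, hc1, hc⟩ := hdbl (1 / 2) one_half_pos
  have hμ0 : ∀ t > 0, 0 ≤ μ t := fun t ht => by simpa using hsign 0 t ht
  refine ⟨c ^ 2 * 2 ^ d / 4 + exp (3 * K ^ 2), ?_, fun r ⟨hr0, hrK⟩ => ?_⟩
  · have := one_le_exp (by positivity : 0 ≤ 3 * K ^ 2)
    have : 0 < c ^ 2 * 2 ^ d / 4 := by positivity
    linarith
  have hj2r : 0 ≤ j (2 * r) := by
    rw [hj]
    exact setIntegral_nonneg measurableSet_Ioi
      fun t ht => mul_nonneg (heatKernel.nonneg (le_of_lt ht)) (hμ0 t ht)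
  calc j r ≤ (c ^ 2 * 2 ^ d / 4 + exp (3 * r ^ 2)) * j (2 * r) := by
        rw [hj, hj]
        exact integral_heatKernel_mul_le (hsmooth.continuousOn.aestronglyMeasurable measurableSet_Ioi)
          hμ0 hint (by linarith) hc hr0.ne'
    _ ≤ (c ^ 2 * 2 ^ d / 4 + exp (3 * K ^ 2)) * j (2 * r) := by gcongr

/-- If `μ` is completely monotone (not identically zero) on `(0,∞)` with
`∫₀^∞ min(t,1) μ(t) dt < ∞` and satisfies the doubling condition `μ(r) ≤ c(K) μ(2r)` on
every interval `(0,K)`, then the kernel `j(r) = ∫₀^∞ (4πt)^{-d/2} e^{-r²/(4t)} μ(t) dt`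
satisfies the doubling condition `j(r) ≤ C(K) j(2r)` on every interval `(0,K)`. -/
theorem levy_kernel_doubling_near_zero
    (d : ℕ) (hd : 1 ≤ d) (μ : ℝ → ℝ)
    (hsmooth : ContDiffOn ℝ (⊤ : ℕ∞) μ (Ioi 0))
    (hsign : ∀ (n : ℕ) (t : ℝ), 0 < t →
      0 ≤ (-1 : ℝ) ^ n * iteratedDerivWithin n μ (Ioi 0) t)
    (hne : ∃ t > (0 : ℝ), μ t ≠ 0)
    (hint : IntegrableOn (fun t => min t 1 * μ t) (Ioi 0))
    (hdbl : ∀ K > (0 : ℝ), ∃ c > (1 : ℝ), ∀ r ∈ Ioo (0 : ℝ) K, μ r ≤ c * μ (2 * r))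
    (j : ℝ → ℝ)
    (hj : ∀ r : ℝ, j r =
      ∫ t in Ioi (0 : ℝ), (4 * π * t) ^ (-(d : ℝ) / 2) * Real.exp (-(r ^ 2) / (4 * t)) * μ t) :
    ∀ K > (0 : ℝ), ∃ C > (1 : ℝ), ∀ r ∈ Ioo (0 : ℝ) K, j r ≤ C * j (2 * r) :=
  levy_kernel_doubling_near_zero_general d μ hsmooth hsign hint hdbl j hj
end

section
/- Let d ≥ 2, R > 0, and let D ⊆ ℝ^d be an open set such that the open ball of radius R centered at (0̃, R) is contained in D and the open ball of radius R centered at (0̃, −R) is contained in ℝ^d ∖ D. Write δ_D(z) := dist(z, ℝ^d ∖ D), fix 0 < x_d < R, set x := (0̃, x_d), and let e be any unit vector in ℝ^d orthogonal to the d-th coordinate vector e_d. Then: (i) δ_D(x) = x_d; (ii) for every ε ∈ ℝ, R − √(ε² + (R − x_d)²) − x_d ≤ δ_D(x + εe) − δ_D(x) ≤ √(ε² + (R + x_d)²) − R − x_d; (iii) lim_{ε→0} (δ_D(x + εe) − δ_D(x))/ε = 0; (iv) if moreover x_d ≤ R/4, then |δ_D(x + εe) + δ_D(x − εe) − 2 δ_D(x)|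 ≤ (4/(3R)) ε² for every ε ∈ ℝ. -/
/-!
If the ball `B(c, R)` misses a set `S`, then `dist(z, S) ≥ R - |z - c|`; if `B(c, R)` lies in `S`
and `z` is outside it, then `dist(z, S) ≤ |z - c| - R`. Applied to the two tangent balls and the
points `x + εe`, whose distances to the centres `(0̃, ±R)` are `√(ε² + (R ∓ x_d)²)`, this pins
`δ_D(x + εe)` between two functions of `ε` that agree with `x_d` up to `ε² / (2(R - x_d))`.
All four claims follow from this quadratic estimate.
-/

open Metric Filter Topology

theorem sub_dist_le_infDist_of_ball_subset_compl {α : Type*} [PseudoMetricSpace α]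
    {S : Set α} {c : α} {R : ℝ} (hS : S.Nonempty) (h : ball c R ⊆ Sᶜ) (z : α) :
    R - dist z c ≤ infDist z S :=
  (le_infDist hS).2 fun y hy => by
    have hyc : R ≤ dist y c := not_lt.1 fun hlt => h (mem_ball.2 hlt) hy
    linarith [dist_triangle y z c, dist_comm y z]

theorem infDist_le_dist_sub_of_ball_subset {E : Type*} [NormedAddCommGroup E]
    [NormedSpace ℝ E] {S : Set E} {c z : E} {R : ℝ} (hR : 0 < R) (h : ball c R ⊆ S)
    (hz : R ≤ dist z c) : infDist z S ≤ dist z c - R := by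
  have hzc : 0 < dist z c := hR.trans_le hz
  -- the point of the sphere `∂B(c, R)` on the segment from `c` to `z`
  set w := AffineMap.lineMap c z (R / dist z c)
  have hw : w ∈ closure S := by
    refine closure_mono h ?_
    rw [closure_ball c hR.ne', mem_closedBall, dist_lineMap_left, Real.norm_eq_abs,
      abs_of_pos (by positivity), dist_comm c z, div_mul_cancel₀ _ hzc.ne']
  calc infDist z S = infDist z (closure S) := infDist_closure.symm
    _ ≤ dist z w := infDist_le_dist_of_mem hw
    _ = dist z c - R := by
      rw [dist_comm, dist_lineMap_right, Real.norm_eq_abs, dist_comm c z,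
        abs_of_nonneg (sub_nonneg.2 ((div_le_one hzc).2 hz)), sub_mul, one_mul,
        div_mul_cancel₀ _ hzc.ne']

theorem sqrt_sq_add_sq_le (t : ℝ) {a : ℝ} (ha : 0 < a) :
    √(t ^ 2 + a ^ 2) ≤ a + t ^ 2 / (2 * a) := by
  refine Real.sqrt_le_iff.2 ⟨by positivity, ?_⟩
  have : (a + t ^ 2 / (2 * a)) ^ 2 = a ^ 2 + t ^ 2 + (t ^ 2 / (2 * a)) ^ 2 := by
    field_simp
    ring
  nlinarith [sq_nonneg (t ^ 2 / (2 * a))]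

theorem le_sqrt_sq_add_sq (t a : ℝ) : a ≤ √(t ^ 2 + a ^ 2) :=
  Real.le_sqrt_of_sq_le (by nlinarith [sq_nonneg t])

theorem tendsto_div_nhdsNE_zero_of_abs_le_mul_sq {g : ℝ → ℝ} {C : ℝ}
    (h : ∀ ε, |g ε| ≤ C * ε ^ 2) : Tendsto (fun ε => g ε / ε) (𝓝[≠] 0) (𝓝 0) := by
  refine (squeeze_zero_norm (a := fun ε => C * |ε|) (fun ε => ?_) ?_).mono_left
    nhdsWithin_le_nhds
  · rcases eq_or_ne ε 0 with rfl | hε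
    · simp
    rw [Real.norm_eq_abs, abs_div, div_le_iff₀ (abs_pos.2 hε), mul_assoc, ← sq, sq_abs]
    exact h ε
  · simpa using (continuous_abs.tendsto (0 : ℝ)).const_mul C

section TangentBalls

variable {E : Type*} [NormedAddCommGroup E] [NormedSpace ℝ E]

theorem dist_toLp_smul_toLp_zero {v : E} (hv : ‖v‖ = 1) (ε s t : ℝ) :
    dist (WithLp.toLp 2 (ε • v, s)) (WithLp.toLp 2 ((0 : E), t)) = √(ε ^ 2 + (s - t) ^ 2) := by
  rw [WithLp.prod_dist_eq_of_L2, WithLp.toLp_fst, WithLp.toLp_fst, WithLp.toLp_snd,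
    WithLp.toLp_snd, dist_zero_right, norm_smul, hv, mul_one, Real.norm_eq_abs,
    sq_abs, Real.dist_eq, sq_abs]

theorem toLp_zero_add_smul_toLp (a ε : ℝ) (v : E) :
    WithLp.toLp 2 ((0 : E), a) + ε • WithLp.toLp 2 (v, (0 : ℝ)) = WithLp.toLp 2 (ε • v, a) := by
  rw [← WithLp.toLp_smul, ← WithLp.toLp_add]
  simp

variable {S : Set (WithLp 2 (E × ℝ))} {R : ℝ}

theorem infDist_toLp_bounds_of_tangent_balls (hR : 0 < R)
    (hint : ball (WithLp.toLp 2 ((0 : E), R)) R ⊆ Sᶜ)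
    (hext : ball (WithLp.toLp 2 ((0 : E), -R)) R ⊆ S) {v : E} (hv : ‖v‖ = 1) (ε : ℝ) {a : ℝ}
    (ha : 0 ≤ a) :
    R - √(ε ^ 2 + (R - a) ^ 2) ≤ infDist (WithLp.toLp 2 (ε • v, a)) S ∧
      infDist (WithLp.toLp 2 (ε • v, a)) S ≤ √(ε ^ 2 + (R + a) ^ 2) - R := by
  have hS : S.Nonempty := ⟨_, hext (mem_ball_self hR)⟩
  have hlow := sub_dist_le_infDist_of_ball_subset_compl hS hint (WithLp.toLp 2 (ε • v, a))
  have hdist := dist_toLp_smul_toLp_zero hv ε a (-R)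
  rw [sub_neg_eq_add, add_comm a] at hdist
  have hup := infDist_le_dist_sub_of_ball_subset hR hext
    (hdist ▸ (le_sqrt_sq_add_sq ε (R + a)).trans' (by linarith))
  rw [dist_toLp_smul_toLp_zero hv, ← neg_sub R a, neg_sq] at hlow
  rw [hdist] at hup
  exact ⟨hlow, hup⟩

theorem abs_infDist_toLp_sub_le_of_tangent_balls (hR : 0 < R)
    (hint : ball (WithLp.toLp 2 ((0 : E), R)) R ⊆ Sᶜ)
    (hext : ball (WithLp.toLp 2 ((0 : E), -R)) R ⊆ S) {v : E} (hv : ‖v‖ = 1) (ε : ℝ) {a : ℝ}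
    (ha₀ : 0 ≤ a) (haR : a < R) :
    |infDist (WithLp.toLp 2 (ε • v, a)) S - a| ≤ ε ^ 2 / (2 * (R - a)) := by
  obtain ⟨hlow, hup⟩ := infDist_toLp_bounds_of_tangent_balls hR hint hext hv ε ha₀
  have hlow' := sqrt_sq_add_sq_le ε (sub_pos.2 haR)
  have hup' := sqrt_sq_add_sq_le ε (show 0 < R + a by linarith)
  have : ε ^ 2 / (2 * (R + a)) ≤ ε ^ 2 / (2 * (R - a)) := by
    gcongr
    linarith
  rw [abs_le]
  constructor <;> linarith

theorem abs_second_difference_infDist_toLp_le_of_tangent_balls (hR : 0 < R)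
    (hint : ball (WithLp.toLp 2 ((0 : E), R)) R ⊆ Sᶜ)
    (hext : ball (WithLp.toLp 2 ((0 : E), -R)) R ⊆ S) {v : E} (hv : ‖v‖ = 1) (ε : ℝ) {a : ℝ}
    (ha₀ : 0 ≤ a) (haR : a < R) :
    |infDist (WithLp.toLp 2 (ε • v, a)) S + infDist (WithLp.toLp 2 ((-ε) • v, a)) S - 2 * a|
      ≤ ε ^ 2 / (R - a) :=
  calc _ = |(infDist (WithLp.toLp 2 (ε • v, a)) S - a)
          + (infDist (WithLp.toLp 2 ((-ε) • v, a)) S - a)| := by ring_nf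
    _ ≤ ε ^ 2 / (2 * (R - a)) + (-ε) ^ 2 / (2 * (R - a)) :=
      (abs_add_le _ _).trans (add_le_add
        (abs_infDist_toLp_sub_le_of_tangent_balls hR hint hext hv ε ha₀ haR)
        (abs_infDist_toLp_sub_le_of_tangent_balls hR hint hext hv (-ε) ha₀ haR))
    _ = ε ^ 2 / (R - a) := by
      field_simp
      ring

end TangentBalls

theorem dist_to_boundary_tangential_regularity_general
    (d : ℕ) (R : ℝ) (hR : 0 < R)
    (D : Set (WithLp 2 (EuclideanSpace ℝ (Fin (d - 1)) × ℝ)))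
    (hIntBall :
      Metric.ball ((WithLp.equiv 2 (EuclideanSpace ℝ (Fin (d - 1)) × ℝ)).symm (0, R)) R ⊆ D)
    (hExtBall :
      Metric.ball ((WithLp.equiv 2 (EuclideanSpace ℝ (Fin (d - 1)) × ℝ)).symm (0, -R)) R ⊆ Dᶜ)
    (xd : ℝ) (hxd0 : 0 < xd) (hxdR : xd < R)
    (x : WithLp 2 (EuclideanSpace ℝ (Fin (d - 1)) × ℝ))
    (hx : x = (WithLp.equiv 2 (EuclideanSpace ℝ (Fin (d - 1)) × ℝ)).symm (0, xd))
    (et : EuclideanSpace ℝ (Fin (d - 1))) (het : ‖et‖ = 1)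
    (e : WithLp 2 (EuclideanSpace ℝ (Fin (d - 1)) × ℝ))
    (he : e = (WithLp.equiv 2 (EuclideanSpace ℝ (Fin (d - 1)) × ℝ)).symm (et, 0)) :
    Metric.infDist x Dᶜ = xd ∧
    (∀ ε : ℝ,
      R - Real.sqrt (ε ^ 2 + (R - xd) ^ 2) - xd
          ≤ Metric.infDist (x + ε • e) Dᶜ - Metric.infDist x Dᶜ ∧
      Metric.infDist (x + ε • e) Dᶜ - Metric.infDist x Dᶜ
          ≤ Real.sqrt (ε ^ 2 + (R + xd) ^ 2) - R - xd) ∧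
    Filter.Tendsto (fun ε : ℝ => (Metric.infDist (x + ε • e) Dᶜ - Metric.infDist x Dᶜ) / ε)
      (nhdsWithin 0 {0}ᶜ) (nhds 0) ∧
    (xd ≤ R / 4 → ∀ ε : ℝ,
      |Metric.infDist (x + ε • e) Dᶜ + Metric.infDist (x - ε • e) Dᶜ
          - 2 * Metric.infDist x Dᶜ| ≤ (4 / (3 * R)) * ε ^ 2) := by
  subst hx he
  simp only [WithLp.equiv_symm_apply] at hIntBall hExtBall ⊢
  rw [← compl_compl D] at hIntBall
  have hδ (ε : ℝ) := abs_infDist_toLp_sub_le_of_tangent_balls hR hIntBall hExtBall het ε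
    hxd0.le hxdR
  have hδx : infDist (WithLp.toLp 2 (0, xd)) Dᶜ = xd := by
    simpa [sub_eq_zero] using hδ 0
  simp only [toLp_zero_add_smul_toLp, sub_eq_add_neg _ (_ • _), ← neg_smul]
  rw [hδx]
  refine ⟨rfl, fun ε => ?_, ?_, fun hxd4 ε => ?_⟩
  · obtain ⟨hlow, hup⟩ :=
      infDist_toLp_bounds_of_tangent_balls hR hIntBall hExtBall het ε hxd0.le
    constructor <;> linarith
  · exact tendsto_div_nhdsNE_zero_of_abs_le_mul_sq fun ε => (hδ ε).trans_eq (div_eq_inv_mul _ _)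
  · calc _ ≤ ε ^ 2 / (R - xd) :=
          abs_second_difference_infDist_toLp_le_of_tangent_balls hR hIntBall hExtBall het ε
            hxd0.le hxdR
      _ ≤ ε ^ 2 / (3 * R / 4) := by
          gcongr
          linarith
      _ = 4 / (3 * R) * ε ^ 2 := by
          field_simp

/-- Suppose the open set `D` contains the ball of radius `R` centred at
`(0̃, R)` and its complement contains the ball of radius `R` centred at `(0̃, -R)`.
Let `δ_D(z) = dist(z, Dᶜ)`, `x = (0̃, x_d)` with `0 < x_d < R`, and let `e = (ẽ, 0)` be a
unit vector orthogonal to the `d`-th coordinate direction. Then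
(i) `δ_D(x) = x_d`;
(ii) `R - √(ε² + (R-x_d)²) - x_d ≤ δ_D(x+εe) - δ_D(x) ≤ √(ε² + (R+x_d)²) - R - x_d`;
(iii) `lim_{ε→0} (δ_D(x+εe) - δ_D(x))/ε = 0`;
(iv) if `x_d ≤ R/4`, then `|δ_D(x+εe) + δ_D(x-εe) - 2δ_D(x)| ≤ (4/(3R)) ε²`.
Here `ℝ^d` is modelled as the `L²`-product `ℝ^{d-1} ×₂ ℝ`. -/
theorem dist_to_boundary_tangential_regularity
    (d : ℕ) (hd : 2 ≤ d) (R : ℝ) (hR : 0 < R)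
    (D : Set (WithLp 2 (EuclideanSpace ℝ (Fin (d - 1)) × ℝ))) (hDopen : IsOpen D)
    (hIntBall :
      Metric.ball ((WithLp.equiv 2 (EuclideanSpace ℝ (Fin (d - 1)) × ℝ)).symm (0, R)) R ⊆ D)
    (hExtBall :
      Metric.ball ((WithLp.equiv 2 (EuclideanSpace ℝ (Fin (d - 1)) × ℝ)).symm (0, -R)) R ⊆ Dᶜ)
    (xd : ℝ) (hxd0 : 0 < xd) (hxdR : xd < R)
    (x : WithLp 2 (EuclideanSpace ℝ (Fin (d - 1)) × ℝ))
    (hx : x = (WithLp.equiv 2 (EuclideanSpace ℝ (Fin (d - 1)) × ℝ)).symm (0, xd))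
    (et : EuclideanSpace ℝ (Fin (d - 1))) (het : ‖et‖ = 1)
    (e : WithLp 2 (EuclideanSpace ℝ (Fin (d - 1)) × ℝ))
    (he : e = (WithLp.equiv 2 (EuclideanSpace ℝ (Fin (d - 1)) × ℝ)).symm (et, 0)) :
    Metric.infDist x Dᶜ = xd ∧
    (∀ ε : ℝ,
      R - Real.sqrt (ε ^ 2 + (R - xd) ^ 2) - xd
          ≤ Metric.infDist (x + ε • e) Dᶜ - Metric.infDist x Dᶜ ∧
      Metric.infDist (x + ε • e) Dᶜ - Metric.infDist x Dᶜ
          ≤ Real.sqrt (ε ^ 2 + (R + xd) ^ 2) - R - xd) ∧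
    Filter.Tendsto (fun ε : ℝ => (Metric.infDist (x + ε • e) Dᶜ - Metric.infDist x Dᶜ) / ε)
      (nhdsWithin 0 {0}ᶜ) (nhds 0) ∧
    (xd ≤ R / 4 → ∀ ε : ℝ,
      |Metric.infDist (x + ε • e) Dᶜ + Metric.infDist (x - ε • e) Dᶜ
          - 2 * Metric.infDist x Dᶜ| ≤ (4 / (3 * R)) * ε ^ 2) :=
  dist_to_boundary_tangential_regularity_general d R hR D hIntBall hExtBall xd hxd0 hxdR x hx et het
    e he
end

section
/- Let d ≥ 2 and 0 < r₁ ≤ 1/2. Define D := (−100, 100)^d ∖ ((−100, 49]^{d−1} × [−1/2, 0]) ⊆ ℝ^d, and for an integer n ≥ 2 define C_n := {x = (x̃, x_d) ∈ D : |x̃| ≤ 2^{−n−3} r₁ and x_d ≤ −1 + 2^{−n} r₁²} and D_n := {y = (ỹ, y_d) ∈ D : y_d > 0 and there exists x ∈ C_n with |x − y| < 1}. Then D_n ⊆ {(ỹ, y_d) : |ỹ| ≤ (2^{−n−3} + 2^{−(n−1)/2}) r₁ and 0 < y_d ≤ 2^{−n} r₁²}, and the latter set is contained in the closed ball of radius r₁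 centered at the origin. -/
/-!
A point `x ∈ C_n` lies at height at most `-1 + ε` with `ε = 2^{-n} r₁²`, and a point `y` of `D_n`
lies at positive height, so the vertical part of `x - y` already has length at least `1 - ε`.
Since `|x - y| < 1`, Pythagoras leaves less than `1 - (1 - ε)² ≤ 2ε = (2^{-(n-1)/2} r₁)²` for the
square of the horizontal part, and `y_d < x_d + 1 ≤ ε`. The final inclusion is arithmetic:
for `n ≥ 2` the horizontal radius is at most `3/4 r₁` and the height at most `r₁ / 8`.
-/

open Set

namespace WithLp

variable {E : Type*} [SeminormedAddCommGroup E]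

theorem prod_dist_sq_eq_of_L2 {F : Type*} [SeminormedAddCommGroup F] (x y : WithLp 2 (E × F)) :
    dist x y ^ 2 = dist x.fst y.fst ^ 2 + dist x.snd y.snd ^ 2 := by
  rw [prod_dist_eq_of_L2, Real.sq_sqrt (by positivity)]

theorem prod_norm_le_of_L2 {F : Type*} [SeminormedAddCommGroup F] {y : WithLp 2 (E × F)}
    {α β r : ℝ} (hα : ‖y.fst‖ ≤ α) (hβ : ‖y.snd‖ ≤ β) (hr : 0 ≤ r)
    (h : α ^ 2 + β ^ 2 ≤ r ^ 2) : ‖y‖ ≤ r := by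
  rw [prod_norm_eq_of_L2, Real.sqrt_le_iff]
  refine ⟨hr, ?_⟩
  have h₁ := pow_le_pow_left₀ (norm_nonneg _) hα 2
  have h₂ := pow_le_pow_left₀ (norm_nonneg _) hβ 2
  linarith

theorem norm_fst_le_and_snd_le_of_dist_lt_one {x y : WithLp 2 (E × ℝ)} {ε δ : ℝ}
    (hε : ε ≤ 1) (hδ : 0 ≤ δ) (hεδ : 2 * ε ≤ δ ^ 2) (hx : x.snd ≤ -1 + ε) (hy : 0 ≤ y.snd)
    (hxy : dist x y < 1) : ‖y.fst‖ ≤ ‖x.fst‖ + δ ∧ y.snd ≤ ε := by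
  have hpyth : dist x.fst y.fst ^ 2 + (y.snd - x.snd) ^ 2 < 1 := by
    rw [← sq_abs (y.snd - x.snd), ← Real.dist_eq, dist_comm y.snd, ← prod_dist_sq_eq_of_L2]
    nlinarith [dist_nonneg (x := x) (y := y)]
  have hfst : dist x.fst y.fst < δ := by
    refine lt_of_pow_lt_pow_left₀ 2 hδ ?_
    nlinarith
  have hsnd : y.snd - x.snd < 1 := by nlinarith
  constructor
  · calc ‖y.fst‖ ≤ ‖x.fst‖ + dist x.fst y.fst := by
          rw [dist_eq_norm]; exact norm_le_norm_add_norm_sub _ _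
      _ ≤ ‖x.fst‖ + δ := by linarith
  · linarith

end WithLp

section TwoRpow

variable {n : ℝ}

theorem two_rpow_neg_le_quarter (hn : 2 ≤ n) : (2 : ℝ) ^ (-n) ≤ 1 / 4 := by
  calc (2 : ℝ) ^ (-n) ≤ 2 ^ (-2 : ℝ) := Real.rpow_le_rpow_of_exponent_le one_le_two (by linarith)
    _ = 1 / 4 := by norm_num

theorem two_rpow_neg_sub_three (n : ℝ) : (2 : ℝ) ^ (-n - 3) = 2 ^ (-n) / 8 := by
  rw [Real.rpow_sub two_pos]
  norm_num

theorem two_rpow_neg_sub_one_div_two_sq (n : ℝ) :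
    ((2 : ℝ) ^ (-(n - 1) / 2)) ^ 2 = 2 * 2 ^ (-n) := by
  rw [← Real.rpow_natCast, ← Real.rpow_mul zero_le_two,
    show -(n - 1) / 2 * ((2 : ℕ) : ℝ) = 1 + -n by push_cast; ring,
    Real.rpow_add two_pos, Real.rpow_one]

theorem two_rpow_neg_sub_three_add_le (hn : 2 ≤ n) :
    (2 : ℝ) ^ (-n - 3) + 2 ^ (-(n - 1) / 2) ≤ 3 / 4 := by
  have ha := two_rpow_neg_le_quarter hn
  have hc := two_rpow_neg_sub_one_div_two_sq n
  have hc0 : (0 : ℝ) ≤ 2 ^ (-(n - 1) / 2) := by positivity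
  rw [two_rpow_neg_sub_three]
  nlinarith

end TwoRpow

theorem counterexample_hitting_set_inclusion_general
    (d : ℕ) (r₁ : ℝ) (hr₁0 : 0 < r₁) (hr₁ : r₁ ≤ 1 / 2)
    (n : ℕ) (hn : 2 ≤ n)
    (D Cn Dn : Set (WithLp 2 (EuclideanSpace ℝ (Fin (d - 1)) × ℝ)))
    (hCn : Cn = {x ∈ D | ‖((WithLp.equiv 2 _) x).1‖ ≤ (2 : ℝ) ^ (-(n : ℝ) - 3) * r₁ ∧
            ((WithLp.equiv 2 _) x).2 ≤ -1 + (2 : ℝ) ^ (-(n : ℝ)) * r₁ ^ 2})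
    (hDn : Dn = {y ∈ D | 0 < ((WithLp.equiv 2 _) y).2 ∧ ∃ x ∈ Cn, dist x y < 1}) :
    Dn ⊆ {y | ‖((WithLp.equiv 2 _) y).1‖
              ≤ ((2 : ℝ) ^ (-(n : ℝ) - 3) + (2 : ℝ) ^ (-((n : ℝ) - 1) / 2)) * r₁ ∧
            0 < ((WithLp.equiv 2 _) y).2 ∧
            ((WithLp.equiv 2 _) y).2 ≤ (2 : ℝ) ^ (-(n : ℝ)) * r₁ ^ 2} ∧
    {y : WithLp 2 (EuclideanSpace ℝ (Fin (d - 1)) × ℝ) |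
        ‖((WithLp.equiv 2 _) y).1‖
            ≤ ((2 : ℝ) ^ (-(n : ℝ) - 3) + (2 : ℝ) ^ (-((n : ℝ) - 1) / 2)) * r₁ ∧
          0 < ((WithLp.equiv 2 _) y).2 ∧
          ((WithLp.equiv 2 _) y).2 ≤ (2 : ℝ) ^ (-(n : ℝ)) * r₁ ^ 2}
      ⊆ Metric.closedBall 0 r₁ := by
  have hn' : (2 : ℝ) ≤ n := by exact_mod_cast hn
  have ha := two_rpow_neg_le_quarter hn'
  have ha0 : (0 : ℝ) ≤ 2 ^ (-(n : ℝ)) := by positivity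
  have hr₁sq : r₁ ^ 2 ≤ r₁ / 2 := by nlinarith
  subst hCn hDn
  simp only [WithLp.equiv_apply, WithLp.ofLp_fst, WithLp.ofLp_snd]
  constructor
  · rintro y ⟨-, hy, x, ⟨-, hx₁, hx₂⟩, hxy⟩
    obtain ⟨hy₁, hy₂⟩ := WithLp.norm_fst_le_and_snd_le_of_dist_lt_one
      (δ := 2 ^ (-((n : ℝ) - 1) / 2) * r₁) (by nlinarith) (by positivity)
      (by rw [mul_pow, two_rpow_neg_sub_one_div_two_sq]; nlinarith) hx₂ hy.le hxy
    exact ⟨by linarith, hy, hy₂⟩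
  · rintro y ⟨hy₁, hy, hy₂⟩
    rw [mem_closedBall_zero_iff]
    refine WithLp.prod_norm_le_of_L2 (α := 3 / 4 * r₁) (β := r₁ / 8)
      (hy₁.trans (by nlinarith [two_rpow_neg_sub_three_add_le hn'])) ?_ hr₁0.le (by nlinarith)
    rw [Real.norm_of_nonneg hy.le]
    nlinarith

/-- With `D = (-100,100)^d \ ((-100,49]^{d-1} × [-1/2,0])`,
`C_n = {x ∈ D : |x̃| ≤ 2^{-n-3} r₁, x_d ≤ -1 + 2^{-n} r₁²}` and
`D_n = {y ∈ D : y_d > 0, ∃ x ∈ C_n, |x - y| < 1}`, one has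
`D_n ⊆ {y : |ỹ| ≤ (2^{-n-3} + 2^{-(n-1)/2}) r₁, 0 < y_d ≤ 2^{-n} r₁²}` and the latter set
is contained in the closed ball of radius `r₁` about the origin.
Here `ℝ^d` is modelled as the `L²`-product `ℝ^{d-1} ×₂ ℝ`. -/
theorem counterexample_hitting_set_inclusion
    (d : ℕ) (hd : 2 ≤ d) (r₁ : ℝ) (hr₁0 : 0 < r₁) (hr₁ : r₁ ≤ 1 / 2)
    (n : ℕ) (hn : 2 ≤ n)
    (D Cn Dn : Set (WithLp 2 (EuclideanSpace ℝ (Fin (d - 1)) × ℝ)))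
    (hD : D =
      {y | (∀ i, ((WithLp.equiv 2 _) y).1 i ∈ Ioo (-100 : ℝ) 100) ∧
            ((WithLp.equiv 2 _) y).2 ∈ Ioo (-100 : ℝ) 100} \
      {y | (∀ i, ((WithLp.equiv 2 _) y).1 i ∈ Ioc (-100 : ℝ) 49) ∧
            ((WithLp.equiv 2 _) y).2 ∈ Icc (-(1 / 2) : ℝ) 0})
    (hCn : Cn = {x ∈ D | ‖((WithLp.equiv 2 _) x).1‖ ≤ (2 : ℝ) ^ (-(n : ℝ) - 3) * r₁ ∧
            ((WithLp.equiv 2 _) x).2 ≤ -1 + (2 : ℝ) ^ (-(n : ℝ)) * r₁ ^ 2})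
    (hDn : Dn = {y ∈ D | 0 < ((WithLp.equiv 2 _) y).2 ∧ ∃ x ∈ Cn, dist x y < 1}) :
    Dn ⊆ {y | ‖((WithLp.equiv 2 _) y).1‖
              ≤ ((2 : ℝ) ^ (-(n : ℝ) - 3) + (2 : ℝ) ^ (-((n : ℝ) - 1) / 2)) * r₁ ∧
            0 < ((WithLp.equiv 2 _) y).2 ∧
            ((WithLp.equiv 2 _) y).2 ≤ (2 : ℝ) ^ (-(n : ℝ)) * r₁ ^ 2} ∧
    {y : WithLp 2 (EuclideanSpace ℝ (Fin (d - 1)) × ℝ) |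
        ‖((WithLp.equiv 2 _) y).1‖
            ≤ ((2 : ℝ) ^ (-(n : ℝ) - 3) + (2 : ℝ) ^ (-((n : ℝ) - 1) / 2)) * r₁ ∧
          0 < ((WithLp.equiv 2 _) y).2 ∧
          ((WithLp.equiv 2 _) y).2 ≤ (2 : ℝ) ^ (-(n : ℝ)) * r₁ ^ 2}
      ⊆ Metric.closedBall 0 r₁ :=
  counterexample_hitting_set_inclusion_general d r₁ hr₁0 hr₁ n hn D Cn Dn hCn hDn
end
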